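/- arXiv:1311.3308 — 2 statements merged into one kernel-verified Lean document; each statement's English description precedes it below -/
import Mathlib

section
/- For every real u and every real ρ, the Gaussian tail function satisfies ∫_{u-ρ}^∞ φ(t) dt = ∫_u^∞ φ(t) dt + Σ_{j=1}^∞ (ρ^j / j!) · H_{j-1}(u) · φ(u), where the series on the right converges absolutely. -/
open MeasureTheory Set

/-- The standard Gaussian density `φ(x) = (2π)^{-1/2} e^{-x²/2}`. -/
noncomputable def gaussianDensity (x : ℝ) : ℝ :=
  (Real.sqrt (2 * Real.pi))⁻¹ * Real.exp (-x ^ 2 / 2)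

/-!
Since `φ(u - s) = φ(u) exp(us - s²/2)`, the generating function
`exp(xs - s²/2) = ∑ₙ Hₙ(x) sⁿ / n!` expands `φ(u - s)` as an everywhere absolutely convergent
power series in `s`; integrating it termwise over `[0, ρ]` gives
`∫_{u-ρ}^u φ = ∑ₙ ρⁿ⁺¹ / (n+1)! · Hₙ(u) φ(u)`. The generating function is the Cauchy product of
the series of `exp(xs)` and `exp(-s²/2)`, and the explicit coefficients of `Hₙ` are exactly the
coefficients of that product.
-/

open Polynomial Finset
open scoped Nat Interval

lemma Real.hasSum_pow_div_factorial (x : ℝ) : HasSum (fun n => x ^ n / n !) (Real.exp x) := by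
  rw [Real.exp_eq_exp_ℝ]
  exact NormedSpace.expSeries_div_hasSum_exp x

lemma Nat.factorial_two_mul (n : ℕ) : (2 * n)! = 2 ^ n * n ! * (2 * n - 1)‼ := by
  cases n with
  | zero => rfl
  | succ n =>
    rw [show 2 * (n + 1) = 2 * n + 1 + 1 by ring, Nat.factorial_eq_mul_doubleFactorial,
      show 2 * n + 1 + 1 = 2 * (n + 1) by ring, Nat.doubleFactorial_two_mul,
      show 2 * (n + 1) - 1 = 2 * n + 1 by omega]

/-- The Taylor coefficients of `exp (-t ^ 2 / 2)`. -/
noncomputable def gaussianCoeff (m : ℕ) : ℝ :=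
  if Even m then (-2⁻¹) ^ (m / 2) / (m / 2)! else 0

lemma gaussianCoeff_two_mul (b : ℕ) : gaussianCoeff (2 * b) = (-2⁻¹) ^ b / b ! := by
  simp [gaussianCoeff]

lemma gaussianCoeff_two_mul_add_one (b : ℕ) : gaussianCoeff (2 * b + 1) = 0 := by
  simp [gaussianCoeff]

lemma hasSum_gaussianCoeff_mul_pow (t : ℝ) :
    HasSum (fun m => gaussianCoeff m * t ^ m) (Real.exp (-t ^ 2 / 2)) := by
  have heven : HasSum (fun b => gaussianCoeff (2 * b) * t ^ (2 * b)) (Real.exp (-t ^ 2 / 2)) := by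
    refine (Real.hasSum_pow_div_factorial (-t ^ 2 / 2)).congr_fun fun b => ?_
    rw [gaussianCoeff_two_mul, pow_mul, ← mul_div_right_comm, ← mul_pow]
    ring_nf
  have hodd : HasSum (fun b => gaussianCoeff (2 * b + 1) * t ^ (2 * b + 1)) 0 := by
    simpa only [gaussianCoeff_two_mul_add_one, zero_mul] using hasSum_zero
  simpa only [add_zero] using HasSum.even_add_odd (f := fun m => gaussianCoeff m * t ^ m) heven hodd

lemma summable_norm_gaussianCoeff_mul_pow (t : ℝ) :
    Summable fun m => ‖gaussianCoeff m * t ^ m‖ := by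
  refine .even_add_odd ?_ (by simp [gaussianCoeff_two_mul_add_one])
  convert NormedSpace.norm_expSeries_div_summable (-t ^ 2 / 2) using 2 with b
  rw [gaussianCoeff_two_mul, pow_mul]
  ring_nf

lemma coeff_hermite_add_div_factorial (k m : ℕ) :
    ((hermite (k + m)).coeff k : ℝ) / (k + m)! = gaussianCoeff m / k ! := by
  obtain ⟨b, rfl | rfl⟩ := Nat.even_or_odd' m
  · rw [gaussianCoeff_two_mul, add_comm k, coeff_hermite_explicit,
      ← Nat.add_choose_mul_factorial_mul_factorial, Nat.factorial_two_mul]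
    push_cast
    have : ((2 * b - 1)‼ : ℝ) ≠ 0 := by exact_mod_cast (Nat.doubleFactorial_pos _).ne'
    have : ((2 * b + k).choose k : ℝ) ≠ 0 := by exact_mod_cast (Nat.choose_pos (by omega)).ne'
    field_simp
    rw [← mul_pow]
    norm_num
  · rw [gaussianCoeff_two_mul_add_one, coeff_hermite_of_odd_add (by grind)]
    simp

lemma sum_range_mul_gaussianCoeff (x t : ℝ) (n : ℕ) :
    ∑ k ∈ range (n + 1), (x * t) ^ k / k ! * (gaussianCoeff (n - k) * t ^ (n - k)) =
      aeval x (hermite n) * t ^ n / n ! := by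
  rw [aeval_eq_sum_range' (natDegree_hermite.trans_lt n.lt_succ_self), sum_mul, sum_div]
  refine sum_congr rfl fun k hk => ?_
  obtain ⟨m, rfl⟩ := Nat.exists_eq_add_of_le (Nat.lt_succ_iff.mp (mem_range.mp hk))
  calc (x * t) ^ k / k ! * (gaussianCoeff (k + m - k) * t ^ (k + m - k))
      = x ^ k * t ^ (k + m) * (gaussianCoeff m / k !) := by rw [Nat.add_sub_cancel_left]; ring
    _ = (hermite (k + m)).coeff k • x ^ k * t ^ (k + m) / (k + m)! := by
      rw [← coeff_hermite_add_div_factorial, zsmul_eq_mul]; ring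

lemma summable_norm_aeval_hermite_mul_pow_div_factorial (x t : ℝ) :
    Summable fun n => ‖aeval x (hermite n) * t ^ n / (n ! : ℝ)‖ := by
  simpa only [sum_range_mul_gaussianCoeff] using summable_norm_sum_mul_range_of_summable_norm
    (NormedSpace.norm_expSeries_div_summable (x * t)) (summable_norm_gaussianCoeff_mul_pow t)

lemma hasSum_aeval_hermite_mul_pow_div_factorial (x t : ℝ) :
    HasSum (fun n => aeval x (hermite n) * t ^ n / n !) (Real.exp (x * t - t ^ 2 / 2)) := by
  have h := tsum_mul_tsum_eq_tsum_sum_range_of_summable_norm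
    (NormedSpace.norm_expSeries_div_summable (x * t)) (summable_norm_gaussianCoeff_mul_pow t)
  rw [(Real.hasSum_pow_div_factorial _).tsum_eq, (hasSum_gaussianCoeff_mul_pow t).tsum_eq,
    ← Real.exp_add, neg_div, ← sub_eq_add_neg] at h
  simp only [sum_range_mul_gaussianCoeff] at h
  exact h ▸ (summable_norm_aeval_hermite_mul_pow_div_factorial x t).of_norm.hasSum

section PowerSeriesIntegral

variable {E : Type*} [NormedAddCommGroup E] [NormedSpace ℝ E]
  {a : ℕ → E} {r : ℝ}

theorem hasSum_intervalIntegral_pow_smul [CompleteSpace E]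
    (ha : Summable fun n => ‖a n‖ * |r| ^ n) :
    HasSum (fun n : ℕ => (r ^ (n + 1) / (n + 1)) • a n) (∫ t in 0..r, ∑' n, t ^ n • a n) := by
  have hbound : ∀ t ∈ Ι 0 r, ∀ n, ‖t ^ n • a n‖ ≤ ‖a n‖ * |r| ^ n := fun t ht n => by
    have htr : |t| ≤ |r| := by simpa using abs_sub_left_of_mem_uIcc (uIoc_subset_uIcc ht)
    rw [norm_smul, norm_pow, Real.norm_eq_abs, mul_comm]
    gcongr
  have hterm : ∀ n : ℕ, ∫ t in 0..r, t ^ n • a n = (r ^ (n + 1) / (n + 1)) • a n := fun n => by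
    rw [intervalIntegral.integral_smul_const, integral_pow, zero_pow n.succ_ne_zero, sub_zero]
  simp only [← hterm]
  refine intervalIntegral.hasSum_integral_of_dominated_convergence (fun n _ => ‖a n‖ * |r| ^ n)
    (fun n => (by fun_prop : Continuous fun t : ℝ => t ^ n • a n).aestronglyMeasurable)
    (fun n => ae_of_all _ fun t ht => hbound t ht n) (ae_of_all _ fun _ _ => ha)
    intervalIntegrable_const (ae_of_all _ fun t ht => ?_)
  exact (ha.of_nonneg_of_le (fun _ => norm_nonneg _) (hbound t ht)).of_norm.hasSum

theorem summable_norm_pow_succ_div_smul (ha : Summable fun n => ‖a n‖ * |r| ^ n) :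
    Summable fun n : ℕ => ‖(r ^ (n + 1) / (n + 1)) • a n‖ := by
  refine (ha.mul_left |r|).of_nonneg_of_le (fun _ => norm_nonneg _) fun n => ?_
  have hn : (1 : ℝ) ≤ ‖(n : ℝ) + 1‖ := by
    rw [Real.norm_of_nonneg (by positivity)]
    linarith [n.cast_nonneg (α := ℝ)]
  calc ‖(r ^ (n + 1) / (n + 1)) • a n‖ = |r| * (‖a n‖ * |r| ^ n) / ‖(n : ℝ) + 1‖ := by
        rw [norm_smul, norm_div, norm_pow, Real.norm_eq_abs, pow_succ]; ring
    _ ≤ |r| * (‖a n‖ * |r| ^ n) := div_le_self (by positivity) hn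

end PowerSeriesIntegral

lemma gaussianDensity_eq_gaussianPDFReal :
    gaussianDensity = ProbabilityTheory.gaussianPDFReal 0 1 := by
  ext x
  simp [gaussianDensity, ProbabilityTheory.gaussianPDFReal]

lemma integrable_gaussianDensity : Integrable gaussianDensity :=
  gaussianDensity_eq_gaussianPDFReal ▸ ProbabilityTheory.integrable_gaussianPDFReal 0 1

lemma gaussianDensity_sub (u s : ℝ) :
    gaussianDensity (u - s) = gaussianDensity u * Real.exp (u * s - s ^ 2 / 2) := by
  rw [gaussianDensity, gaussianDensity, mul_assoc, ← Real.exp_add]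
  ring_nf

lemma hasSum_gaussianDensity_sub (u s : ℝ) :
    HasSum (fun n => s ^ n • (aeval u (hermite n) * gaussianDensity u / (n ! : ℝ)))
      (gaussianDensity (u - s)) := by
  rw [gaussianDensity_sub, mul_comm]
  refine ((hasSum_aeval_hermite_mul_pow_div_factorial u s).mul_right _).congr_fun fun n => ?_
  rw [smul_eq_mul]
  ring

lemma summable_norm_aeval_hermite_mul_gaussianDensity_div_factorial (u r : ℝ) :
    Summable fun n => ‖aeval u (hermite n) * gaussianDensity u / (n ! : ℝ)‖ * |r| ^ n := by
  refine ((summable_norm_aeval_hermite_mul_pow_div_factorial u |r|).mul_right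
    (gaussianDensity u)).congr fun n => ?_
  have hφ : 0 ≤ gaussianDensity u := by rw [gaussianDensity]; positivity
  simp only [norm_mul, norm_div, norm_pow, Real.norm_eq_abs, abs_abs, abs_of_nonneg hφ]
  ring

/-- the Gaussian tube formula for a half-line: for all real `u` and `ρ`,
`∫_{u-ρ}^∞ φ = ∫_u^∞ φ + Σ_{j=1}^∞ (ρ^j/j!) H_{j-1}(u) φ(u)`, the series converging absolutely.
Here `H_m` is the `m`-th probabilists' Hermite polynomial. -/
theorem gaussian_tube_halfLine (u ρ : ℝ) :
    Summable (fun j : ℕ =>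
      |ρ ^ (j + 1) / (Nat.factorial (j + 1) : ℝ) *
        (Polynomial.aeval u (Polynomial.hermite j) * gaussianDensity u)|) ∧
    ∫ t in Ici (u - ρ), gaussianDensity t =
      (∫ t in Ici u, gaussianDensity t) +
        ∑' j : ℕ, ρ ^ (j + 1) / (Nat.factorial (j + 1) : ℝ) *
          (Polynomial.aeval u (Polynomial.hermite j) * gaussianDensity u) := by
  have ha := summable_norm_aeval_hermite_mul_gaussianDensity_div_factorial u ρ
  have hterm (n : ℕ) :
      (ρ ^ (n + 1) / (n + 1)) • (aeval u (hermite n) * gaussianDensity u / (n ! : ℝ)) =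
      ρ ^ (n + 1) / (n + 1)! * (aeval u (hermite n) * gaussianDensity u) := by
    rw [smul_eq_mul, Nat.factorial_succ]
    push_cast
    field_simp
  have htail : ∫ t in Ici (u - ρ), gaussianDensity t =
      (∫ t in Ici u, gaussianDensity t) + ∫ s in 0..ρ, gaussianDensity (u - s) := by
    rw [intervalIntegral.integral_comp_sub_left, sub_zero, ← intervalIntegral.integral_Ici_sub_Ici'
      integrable_gaussianDensity.integrableOn integrable_gaussianDensity.integrableOn]
    ring
  have hseries : (fun s => gaussianDensity (u - s)) =
      fun s => ∑' n, s ^ n • (aeval u (hermite n) * gaussianDensity u / (n ! : ℝ)) :=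
    funext fun s => (hasSum_gaussianDensity_sub u s).tsum_eq.symm
  refine ⟨?_, ?_⟩
  · simpa only [hterm, Real.norm_eq_abs] using summable_norm_pow_succ_div_smul ha
  · rw [htail, hseries, ← (hasSum_intervalIntegral_pow_smul ha).tsum_eq]
    simp only [hterm]
end

section
/- Let a ≤ b be real numbers and let ρ ≥ 0. Then ∫_{a-ρ}^{b+ρ} φ(t) dt = ∫_a^b φ(t) dt + Σ_{j=1}^∞ (ρ^j / j!) · ( (-1)^{j-1} H_{j-1}(b) φ(b) + H_{j-1}(a) φ(a) ), where the series on the right converges absolutely. -/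
open MeasureTheory Set

/-!
`φ` is the restriction to `ℝ` of an entire function whose `n`-th derivative is `(-1)ⁿ Hₙ φ`, so
its Taylor series at `x` converges everywhere: `φ(x + s) = Σₙ Hₙ(x) φ(x) (-s)ⁿ / n!`. For `s`
between `0` and `t` the terms are dominated in absolute value by those at `s = t`, so the series
can be integrated termwise; with `t = ρ` at `b` and `t = -ρ` at `a` this expands the two collars
`∫_b^{b+ρ} φ` and `∫_{a-ρ}^a φ` of `[a, b]`. Over `ℝ` a summable series is absolutely summable.
-/

open Polynomial Nat
open scoped Interval

theorem continuous_gaussianDensity : Continuous gaussianDensity := by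
  unfold gaussianDensity
  fun_prop

theorem iteratedDeriv_cexp_neg_sq_div_two (n : ℕ) :
    iteratedDeriv n (fun z : ℂ => Complex.exp (-(z ^ 2 / 2))) =
      fun z => (-1) ^ n * aeval z (hermite n) * Complex.exp (-(z ^ 2 / 2)) := by
  induction n with
  | zero => funext z; simp
  | succ n ih =>
    funext z
    have hexp : HasDerivAt (fun w : ℂ => Complex.exp (-(w ^ 2 / 2)))
        (-z * Complex.exp (-(z ^ 2 / 2))) z := by
      refine ((hasDerivAt_pow 2 z).div_const 2).fun_neg.cexp.congr_deriv ?_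
      norm_num
      ring
    rw [iteratedDeriv_succ, ih,
      ((((hermite n).hasDerivAt_aeval z).const_mul _).fun_mul hexp).deriv,
      hermite_succ, map_sub, map_mul, aeval_X, pow_succ]
    ring

theorem hasSum_gaussianDensity_add (x t : ℝ) :
    HasSum (fun n => aeval x (hermite n) * gaussianDensity x / n ! * (-t) ^ n)
      (gaussianDensity (x + t)) := by
  have hentire : Differentiable ℂ fun z : ℂ => Complex.exp (-(z ^ 2 / 2)) := by fun_prop
  have htaylor := (Complex.hasSum_taylorSeries_of_entire hentire x (x + t)).mul_left
    ((Real.sqrt (2 * Real.pi) : ℂ)⁻¹)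
  have hvalue : ((gaussianDensity (x + t) : ℝ) : ℂ) =
      (Real.sqrt (2 * Real.pi) : ℂ)⁻¹ * Complex.exp (-((x + t : ℂ) ^ 2 / 2)) := by
    simp only [gaussianDensity, neg_div]
    push_cast [Complex.ofReal_exp]
    ring
  have hterm (n : ℕ) : ((aeval x (hermite n) * gaussianDensity x / n ! * (-t) ^ n : ℝ) : ℂ) =
      (Real.sqrt (2 * Real.pi) : ℂ)⁻¹ * ((n ! : ℂ)⁻¹ • ((x + t : ℂ) - x) ^ n •
        iteratedDeriv n (fun z : ℂ => Complex.exp (-(z ^ 2 / 2))) x) := by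
    simp only [iteratedDeriv_cexp_neg_sq_div_two, add_sub_cancel_left, smul_eq_mul,
      gaussianDensity, neg_div]
    rw [← Complex.coe_algebraMap, aeval_algebraMap_apply, Complex.coe_algebraMap]
    push_cast [Complex.ofReal_exp]
    ring
  rw [← Complex.hasSum_ofReal, hvalue]
  exact htaylor.congr_fun hterm

theorem integral_div_factorial_mul_neg_pow (c t : ℝ) (j : ℕ) :
    ∫ s in (0 : ℝ)..t, c / j ! * (-s) ^ j = t ^ (j + 1) / (j + 1)! * ((-1) ^ j * c) :=
  calc ∫ s in (0 : ℝ)..t, c / j ! * (-s) ^ j = ∫ s in (0 : ℝ)..t, c / j ! * (-1) ^ j * s ^ j := by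
        congr 1; funext s; ring
    _ = t ^ (j + 1) / (j + 1)! * ((-1) ^ j * c) := by
        rw [intervalIntegral.integral_const_mul, integral_pow, Nat.factorial_succ]
        push_cast
        field_simp
        ring

open intervalIntegral in
theorem hasSum_intervalIntegral_gaussianDensity (x t : ℝ) :
    HasSum
      (fun j : ℕ => t ^ (j + 1) / (j + 1)! * ((-1) ^ j * aeval x (hermite j) * gaussianDensity x))
      (∫ s in x..x + t, gaussianDensity s) := by
  have hshift : ∫ s in x..x + t, gaussianDensity s = ∫ s in 0..t, gaussianDensity (x + s) := by
    simp [integral_comp_add_left]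
  have hbound (j : ℕ) : ∀ s ∈ Ι 0 t,
      ‖aeval x (hermite j) * gaussianDensity x / j ! * (-s) ^ j‖ ≤
        |aeval x (hermite j) * gaussianDensity x / j ! * t ^ j| := by
    intro s hs
    have hst : |s| ≤ |t| := by simpa using abs_sub_left_of_mem_uIcc (uIoc_subset_uIcc hs)
    rw [Real.norm_eq_abs, abs_mul, abs_mul, abs_pow, abs_pow, abs_neg]
    gcongr
  have hdom : Summable fun j => |aeval x (hermite j) * gaussianDensity x / j ! * t ^ j| :=
    summable_abs_iff.2 (by simpa using (hasSum_gaussianDensity_add x (-t)).summable)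
  have htermwise := hasSum_integral_of_dominated_convergence (μ := volume) _
    (fun j => (by fun_prop : Continuous _).aestronglyMeasurable) (fun j => ae_of_all _ (hbound j))
    (ae_of_all _ fun _ _ => hdom) intervalIntegrable_const
    (ae_of_all _ fun s _ => hasSum_gaussianDensity_add x s)
  simp only [integral_div_factorial_mul_neg_pow] at htermwise
  simpa only [hshift, mul_assoc] using htermwise

open intervalIntegral in
/-- the Gaussian tube formula for a closed interval `[a,b]`: for `a ≤ b` and `ρ ≥ 0`,
`∫_{a-ρ}^{b+ρ} φ = ∫_a^b φ + Σ_{j=1}^∞ (ρ^j/j!) ((-1)^{j-1} H_{j-1}(b) φ(b) + H_{j-1}(a) φ(a))`,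
the series converging absolutely.  `H_m` is the `m`-th probabilists' Hermite polynomial. -/
theorem gaussian_tube_interval (a b ρ : ℝ) (hab : a ≤ b) (hρ : 0 ≤ ρ) :
    Summable (fun j : ℕ =>
      |ρ ^ (j + 1) / (Nat.factorial (j + 1) : ℝ) *
        ((-1 : ℝ) ^ j * (Polynomial.aeval b (Polynomial.hermite j)) * gaussianDensity b +
          (Polynomial.aeval a (Polynomial.hermite j)) * gaussianDensity a)|) ∧
    ∫ t in Icc (a - ρ) (b + ρ), gaussianDensity t =
      (∫ t in Icc a b, gaussianDensity t) +
        ∑' j : ℕ, ρ ^ (j + 1) / (Nat.factorial (j + 1) : ℝ) *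
          ((-1 : ℝ) ^ j * (Polynomial.aeval b (Polynomial.hermite j)) * gaussianDensity b +
            (Polynomial.aeval a (Polynomial.hermite j)) * gaussianDensity a) := by
  have hterm (j : ℕ) : ρ ^ (j + 1) / (j + 1)! *
      ((-1) ^ j * aeval b (hermite j) * gaussianDensity b +
        aeval a (hermite j) * gaussianDensity a) =
      ρ ^ (j + 1) / (j + 1)! * ((-1) ^ j * aeval b (hermite j) * gaussianDensity b) -
        (-ρ) ^ (j + 1) / (j + 1)! * ((-1) ^ j * aeval a (hermite j) * gaussianDensity a) := by
    have hsign : ((-1 : ℝ) ^ j) ^ 2 = 1 := by rw [← pow_mul, pow_mul', neg_one_sq, one_pow]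
    rw [neg_pow]
    linear_combination (-(ρ ^ (j + 1) / (j + 1)! * aeval a (hermite j) * gaussianDensity a)) * hsign
  have hseries := ((hasSum_intervalIntegral_gaussianDensity b ρ).sub
    (hasSum_intervalIntegral_gaussianDensity a (-ρ))).congr_fun hterm
  have hφ (c d : ℝ) : IntervalIntegrable gaussianDensity volume c d :=
    continuous_gaussianDensity.intervalIntegrable c d
  refine ⟨summable_abs_iff.2 hseries.summable, ?_⟩
  rw [integral_Icc_eq_integral_Ioc, ← integral_of_le (by linarith), integral_Icc_eq_integral_Ioc,
    ← integral_of_le hab, hseries.tsum_eq,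
    ← integral_add_adjacent_intervals (hφ (a - ρ) a) (hφ a (b + ρ)),
    ← integral_add_adjacent_intervals (hφ a b) (hφ b (b + ρ)), integral_symm a, ← sub_eq_add_neg]
  ring
end
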